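/- arXiv:math/0108020 — 3 statements merged into one kernel-verified Lean document; each statement's English description precedes it below -/
import Mathlib

section
/- The function χ is a bicharacter of the multiplicative group Γ: for all γ, γ', t, t' ∈ Γ one has χ(γ·γ', t) = χ(γ, t)·χ(γ', t) and χ(γ, t·t') = χ(γ, t)·χ(γ, t'). -/
/-- `χ` is a bicharacter of the multiplicative group `Γ`: for all
`γ, γ', t, t' ∈ Γ`, `χ(γ·γ', t) = χ(γ, t)·χ(γ', t)` and `χ(γ, t·t') = χ(γ, t)·χ(γ, t')`.
Here `χ` is any function satisfying the defining formula
`χ(q^k·r, q^l·s) = q^{k·l} · exp(−i·(N/(2π))·(log r)·(log s))`. -/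
theorem chi_bicharacter (N : ℕ) (hN : Even N) (hN6 : 6 ≤ N)
    (q : ℂ) (hq : q = Complex.exp (2 * Real.pi * Complex.I / N))
    (Γ : Set ℂ)
    (hΓ : Γ = ⋃ k ∈ Finset.range N, (fun r : ℝ => q ^ k * (r : ℂ)) '' Set.Ioi (0 : ℝ))
    (χ : ℂ → ℂ → ℂ)
    (hχ : ∀ k l : ℕ, k < N → l < N → ∀ r s : ℝ, 0 < r → 0 < s →
      χ (q ^ k * (r : ℂ)) (q ^ l * (s : ℂ))
        = q ^ (k * l) *
          Complex.exp (-Complex.I * ((N : ℂ) / (2 * (Real.pi : ℂ)))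
            * (Real.log r : ℂ) * (Real.log s : ℂ))) :
    ∀ γ ∈ Γ, ∀ γ' ∈ Γ, ∀ t ∈ Γ, ∀ t' ∈ Γ,
      χ (γ * γ') t = χ γ t * χ γ' t ∧ χ γ (t * t') = χ γ t * χ γ t' := by
  have hNpos : 0 < N := by omega
  have hq1 : q ^ N = 1 := by
    rw [hq, ← Complex.exp_nat_mul]
    have hN0 : (N : ℂ) ≠ 0 := Nat.cast_ne_zero.mpr (by omega)
    rw [show (N : ℂ) * (2 * Real.pi * Complex.I / N) = 2 * Real.pi * Complex.I by
      field_simp]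
    exact Complex.exp_two_pi_mul_I
  have hqmod : ∀ m : ℕ, q ^ (m % N) = q ^ m := by
    intro m
    conv_rhs => rw [← Nat.mod_add_div m N]
    rw [pow_add, pow_mul, hq1, one_pow, mul_one]
  have hmem : ∀ γ ∈ Γ, ∃ k, k < N ∧ ∃ r : ℝ, 0 < r ∧ γ = q ^ k * r := by
    intro γ hγ
    rw [hΓ] at hγ
    simp only [Set.mem_iUnion, Finset.mem_range, Set.mem_image, Set.mem_Ioi] at hγ
    obtain ⟨k, hk, r, hr, hγ⟩ := hγ
    exact ⟨k, hk, r, hr, hγ.symm⟩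
  have key1 : ∀ k k' l : ℕ, k < N → k' < N → l < N → ∀ r r' s : ℝ,
      0 < r → 0 < r' → 0 < s →
      χ ((q ^ k * r) * (q ^ k' * r')) (q ^ l * s)
        = χ (q ^ k * r) (q ^ l * s) * χ (q ^ k' * r') (q ^ l * s) := by
    intro k k' l hk hk' hl r r' s hr hr' hs
    have h1 : (q ^ k * (r : ℂ)) * (q ^ k' * (r' : ℂ))
        = q ^ ((k + k') % N) * ((r * r' : ℝ) : ℂ) := by
      rw [hqmod, pow_add]; push_cast; ring
    rw [h1, hχ _ _ (Nat.mod_lt _ hNpos) hl _ _ (mul_pos hr hr') hs,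
        hχ _ _ hk hl _ _ hr hs, hχ _ _ hk' hl _ _ hr' hs]
    have h2 : q ^ ((k + k') % N * l) = q ^ (k * l) * q ^ (k' * l) := by
      rw [← hqmod ((k + k') % N * l), Nat.mod_mul_mod, hqmod, add_mul, pow_add]
    have h3 : Real.log (r * r') = Real.log r + Real.log r' :=
      Real.log_mul hr.ne' hr'.ne'
    have h4 : Complex.exp (-Complex.I * ((N : ℂ) / (2 * (Real.pi : ℂ)))
          * ((Real.log (r * r') : ℝ) : ℂ) * (Real.log s : ℂ))
        = Complex.exp (-Complex.I * ((N : ℂ) / (2 * (Real.pi : ℂ)))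
            * (Real.log r : ℂ) * (Real.log s : ℂ))
          * Complex.exp (-Complex.I * ((N : ℂ) / (2 * (Real.pi : ℂ)))
            * (Real.log r' : ℂ) * (Real.log s : ℂ)) := by
      rw [← Complex.exp_add]
      congr 1
      rw [h3]; push_cast; ring
    rw [h2, h4]; ring
  have key2 : ∀ k l l' : ℕ, k < N → l < N → l' < N → ∀ r s s' : ℝ,
      0 < r → 0 < s → 0 < s' →
      χ (q ^ k * r) ((q ^ l * s) * (q ^ l' * s'))
        = χ (q ^ k * r) (q ^ l * s) * χ (q ^ k * r) (q ^ l' * s') := by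
    intro k l l' hk hl hl' r s s' hr hs hs'
    have h1 : (q ^ l * (s : ℂ)) * (q ^ l' * (s' : ℂ))
        = q ^ ((l + l') % N) * ((s * s' : ℝ) : ℂ) := by
      rw [hqmod, pow_add]; push_cast; ring
    rw [h1, hχ _ _ hk (Nat.mod_lt _ hNpos) _ _ hr (mul_pos hs hs'),
        hχ _ _ hk hl _ _ hr hs, hχ _ _ hk hl' _ _ hr hs']
    have h2 : q ^ (k * ((l + l') % N)) = q ^ (k * l) * q ^ (k * l') := by
      rw [← hqmod (k * ((l + l') % N)), Nat.mul_mod_mod, hqmod, mul_add, pow_add]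
    have h3 : Real.log (s * s') = Real.log s + Real.log s' :=
      Real.log_mul hs.ne' hs'.ne'
    have h4 : Complex.exp (-Complex.I * ((N : ℂ) / (2 * (Real.pi : ℂ)))
          * (Real.log r : ℂ) * ((Real.log (s * s') : ℝ) : ℂ))
        = Complex.exp (-Complex.I * ((N : ℂ) / (2 * (Real.pi : ℂ)))
            * (Real.log r : ℂ) * (Real.log s : ℂ))
          * Complex.exp (-Complex.I * ((N : ℂ) / (2 * (Real.pi : ℂ)))
            * (Real.log r : ℂ) * (Real.log s' : ℂ)) := by
      rw [← Complex.exp_add]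
      congr 1
      rw [h3]; push_cast; ring
    rw [h2, h4]; ring
  intro γ hγ γ' hγ' t ht t' ht'
  obtain ⟨k, hk, r, hr, rfl⟩ := hmem γ hγ
  obtain ⟨k', hk', r', hr', rfl⟩ := hmem γ' hγ'
  obtain ⟨l, hl, s, hs, rfl⟩ := hmem t ht
  obtain ⟨l', hl', s', hs', rfl⟩ := hmem t' ht'
  exact ⟨key1 k k' l hk hk' hl r r' s hr hr' hs,
         key2 k l l' hk hl hl' r s s' hr hs hs'⟩
end

section
/- The bicharacter χ is nondegenerate: if c ∈ Γ satisfies χ(c, t) = 1 for all t ∈ Γ, then c = 1. -/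
/-- The bicharacter `χ` is nondegenerate: if `c ∈ Γ` satisfies `χ(c, t) = 1`
for all `t ∈ Γ`, then `c = 1`. -/
theorem chi_nondegenerate (N : ℕ) (hN : Even N) (hN6 : 6 ≤ N)
    (q : ℂ) (hq : q = Complex.exp (2 * Real.pi * Complex.I / N))
    (Γ : Set ℂ)
    (hΓ : Γ = ⋃ k ∈ Finset.range N, (fun r : ℝ => q ^ k * (r : ℂ)) '' Set.Ioi (0 : ℝ))
    (χ : ℂ → ℂ → ℂ)
    (hχ : ∀ k l : ℕ, k < N → l < N → ∀ r s : ℝ, 0 < r → 0 < s →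
      χ (q ^ k * (r : ℂ)) (q ^ l * (s : ℂ))
        = q ^ (k * l) *
          Complex.exp (-Complex.I * ((N : ℂ) / (2 * (Real.pi : ℂ)))
            * (Real.log r : ℂ) * (Real.log s : ℂ))) :
    ∀ c ∈ Γ, (∀ t ∈ Γ, χ c t = 1) → c = 1 := by
  intro c hc h
  have hN0 : (0 : ℕ) < N := by omega
  have hmem : ∀ l : ℕ, l < N → ∀ s : ℝ, 0 < s → q ^ l * (s : ℂ) ∈ Γ := by
    intro l hl s hs
    rw [hΓ]
    simp only [Set.mem_iUnion, Set.mem_image, Finset.mem_range]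
    exact ⟨l, hl, s, hs, rfl⟩
  rw [hΓ] at hc
  simp only [Set.mem_iUnion, Set.mem_image, Finset.mem_range, Set.mem_Ioi] at hc
  obtain ⟨k, hk, r, hr, rfl⟩ := hc
  -- Step 1: r = 1
  have hr1 : r = 1 := by
    by_contra hne
    have hlr : Real.log r ≠ 0 := by
      intro h0
      exact hne (by
        have := Real.exp_log hr
        rw [h0, Real.exp_zero] at this; exact this.symm)
    set a : ℝ := (N : ℝ) / (2 * Real.pi) * Real.log r with ha
    have hπ := Real.pi_pos
    have hNr : (0:ℝ) < (N:ℝ) := by exact_mod_cast hN0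
    have haz : a ≠ 0 := by
      apply mul_ne_zero _ hlr
      positivity
    set s : ℝ := Real.exp (Real.pi / a) with hs
    have hs0 : 0 < s := Real.exp_pos _
    have hls : Real.log s = Real.pi / a := Real.log_exp _
    have h1 := h (q ^ 0 * (s : ℂ)) (hmem 0 hN0 s hs0)
    rw [hχ k 0 hk hN0 r s hr hs0] at h1
    rw [mul_zero, pow_zero, one_mul] at h1
    have harg : -Complex.I * ((N : ℂ) / (2 * (Real.pi : ℂ)))
        * (Real.log r : ℂ) * (Real.log s : ℂ) = -(Real.pi : ℂ) * Complex.I := by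
      rw [hls]
      have h2π : (2 * (Real.pi : ℂ)) ≠ 0 := by
        simp [Complex.ofReal_ne_zero, Real.pi_ne_zero]
      have haC : (a : ℂ) ≠ 0 := by exact_mod_cast haz
      have hNC : (N : ℂ) ≠ 0 := by exact_mod_cast hN0.ne'
      have hlrC : ((Real.log r : ℝ) : ℂ) ≠ 0 := by exact_mod_cast hlr
      have hπC : ((Real.pi : ℝ) : ℂ) ≠ 0 := by exact_mod_cast Real.pi_ne_zero
      rw [ha] at haC ⊢
      push_cast at haC ⊢
      field_simp [hNC, hlrC, hπC]
    rw [harg] at h1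
    have : Complex.exp (-(Real.pi : ℂ) * Complex.I) = -1 := by
      rw [neg_mul, Complex.exp_neg, Complex.exp_pi_mul_I]
      norm_num
    rw [this] at h1
    norm_num at h1
  subst hr1
  -- Step 2: q ^ k = 1
  have h1N : 1 < N := by omega
  have h2 := h (q ^ 1 * ((1 : ℝ) : ℂ)) (hmem 1 h1N 1 one_pos)
  rw [hχ k 1 hk h1N 1 1 one_pos one_pos] at h2
  simp only [Real.log_one, Complex.ofReal_zero, mul_zero, Complex.exp_zero, mul_one,
    zero_mul] at h2
  -- h2 : q ^ (k * 1) = 1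
  have hprim : IsPrimitiveRoot q N := by
    rw [hq]; exact Complex.isPrimitiveRoot_exp N (by omega)
  have hdvd : N ∣ k := by
    have := (IsPrimitiveRoot.pow_eq_one_iff_dvd hprim k).mp (by simpa using h2)
    exact this
  have hk0 : k = 0 := by
    rcases Nat.eq_zero_of_dvd_of_lt hdvd hk with h
    · exact h
  subst hk0
  simp
end

section
/- For every element T of a unital C*-algebra A, the z-transform z_T = T·(1 + T*T)^{−1/2} satisfies 1 − z_T*·z_T = (1 + T*T)^{−1}; in particular 1 − z_T*·z_T is positive and invertible, and T can be recovered from its z-transform by T = z_T·(1 − z_T*·z_T)^{−1/2}. -/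
open scoped Pointwise

/-- For every element `T` of a unital C*-algebra `A`, the z-transform
`z_T = T·(1 + T*T)^{−1/2}` satisfies `1 − z_T*·z_T = (1 + T*T)^{−1}`; in particular
`1 − z_T*·z_T` is positive and invertible, and `T` is recovered from `z_T` by
`T = z_T·(1 − z_T*·z_T)^{−1/2}`.  Here `x^{-1/2}` and `x⁻¹` of positive invertible elements
are given by continuous functional calculus. -/
theorem zTransform_recovery {A : Type*} [CStarAlgebra A] [PartialOrder A] [StarOrderedRing A] (T : A)
    (zT : A) (hzT : zT = T * cfc (fun x : ℝ => x ^ (-(1/2 : ℝ))) (1 + star T * T)) :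
    1 - star zT * zT = cfc (fun x : ℝ => x⁻¹) (1 + star T * T) ∧
    0 ≤ 1 - star zT * zT ∧
    IsUnit (1 - star zT * zT) ∧
    T = zT * cfc (fun x : ℝ => x ^ (-(1/2 : ℝ))) (1 - star zT * zT) := by
  set f : ℝ → ℝ := fun x => x ^ (-(1/2 : ℝ)) with hf
  set a : A := 1 + star T * T with ha
  have hTT : (0:A) ≤ star T * T := star_mul_self_nonneg T
  have ha_sa : IsSelfAdjoint a := by
    rw [ha]; exact (IsSelfAdjoint.one A).add (IsSelfAdjoint.star_mul_self T)
  -- spectrum of `a` lies in `[1, ∞)`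
  have hspec : ∀ x ∈ spectrum ℝ a, 1 ≤ x := by
    intro x hx
    have h1 : x ∈ ({1} : Set ℝ) + spectrum ℝ (star T * T) := by
      rw [spectrum.singleton_add_eq]
      simpa [ha, Algebra.algebraMap_eq_smul_one] using hx
    obtain ⟨u, hu, v, hv, huv⟩ := Set.mem_add.mp h1
    have hv0 : 0 ≤ v :=
      (StarOrderedRing.nonneg_iff_spectrum_nonneg (R := ℝ) _).mp hTT v hv
    simp only [Set.mem_singleton_iff] at hu
    linarith [huv]
  have hpos : ∀ x ∈ spectrum ℝ a, (0:ℝ) < x := fun x hx => lt_of_lt_of_le one_pos (hspec x hx)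
  -- continuity facts
  have hcrpow : ∀ c : ℝ, ContinuousOn (fun x : ℝ => x ^ c) (spectrum ℝ a) := by
    intro c x hx
    exact (Real.continuousAt_rpow_const x c (Or.inl (ne_of_gt (hpos x hx)))).continuousWithinAt
  have hcinv : ContinuousOn (fun x : ℝ => x⁻¹) (spectrum ℝ a) :=
    ContinuousOn.inv₀ continuousOn_id fun x hx => ne_of_gt (hpos x hx)
  have hcf : ContinuousOn f (spectrum ℝ a) := hcrpow _
  -- `cfc f a` is selfadjoint
  have hfsa : IsSelfAdjoint (cfc f a) := cfc_predicate f a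
  -- key identity: f x * x * f x = 1 on spectrum
  have key1 : cfc f a * a * cfc f a = 1 := by
    have h1 : cfc (fun x : ℝ => (f x * x) * f x) a = cfc f a * a * cfc f a := by
      rw [cfc_mul (fun x : ℝ => f x * x) f a (hcf.mul (continuousOn_id' _)) hcf,
        cfc_mul f (fun x : ℝ => x) a hcf (continuousOn_id' _), cfc_id' ℝ a ha_sa]
    rw [← h1]
    rw [cfc_congr (g := fun _ : ℝ => (1:ℝ)) fun x hx => by
      have hx0 := hpos x hx
      simp only [hf]
      calc x ^ (-(1/2):ℝ) * x * x ^ (-(1/2):ℝ)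
          = x ^ (-(1/2):ℝ) * x ^ (-(1/2):ℝ) * x := by ring
        _ = x ^ (-(1/2) + -(1/2) : ℝ) * x := by rw [Real.rpow_add hx0]
        _ = x⁻¹ * x := by norm_num [Real.rpow_neg_one]
        _ = 1 := inv_mul_cancel₀ hx0.ne']
    exact cfc_const_one ℝ a
  have key2 : cfc f a * cfc f a = cfc (fun x : ℝ => x⁻¹) a := by
    rw [← cfc_mul f f a hcf hcf]
    refine cfc_congr fun x hx => ?_
    have hx0 := hpos x hx
    simp only [hf]
    rw [← Real.rpow_add hx0]
    norm_num [Real.rpow_neg_one]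
  -- compute star zT * zT
  have hstar : star zT = cfc f a * star T := by
    rw [hzT, star_mul, hfsa.star_eq]
  have hz2 : star zT * zT = 1 - cfc (fun x : ℝ => x⁻¹) a := by
    rw [hstar, hzT]
    have hsub : a - 1 = star T * T := by rw [ha]; abel
    have : cfc f a * star T * (T * cfc f a) = cfc f a * (a - 1) * cfc f a := by
      rw [hsub]; noncomm_ring
    rw [this, mul_sub, sub_mul, mul_one, key2, key1]
  have hmain : 1 - star zT * zT = cfc (fun x : ℝ => x⁻¹) a := by
    rw [hz2, sub_sub_cancel]
  refine ⟨hmain, ?_, ?_, ?_⟩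
  · rw [hmain]
    exact cfc_nonneg fun x hx => le_of_lt (inv_pos.mpr (hpos x hx))
  · rw [hmain]
    rw [isUnit_iff_exists]
    refine ⟨a, ?_, ?_⟩
    · have h1 : cfc (fun x : ℝ => x⁻¹ * x) a = cfc (fun x : ℝ => x⁻¹) a * a := by
        rw [cfc_mul (fun x : ℝ => x⁻¹) (fun x : ℝ => x) a hcinv (continuousOn_id' _), cfc_id' ℝ a ha_sa]
      rw [← h1, cfc_congr (g := fun _ : ℝ => (1:ℝ)) fun x hx => by
          simp [inv_mul_cancel₀ (ne_of_gt (hpos x hx))]]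
      exact cfc_const_one ℝ a
    · have h1 : cfc (fun x : ℝ => x * x⁻¹) a = a * cfc (fun x : ℝ => x⁻¹) a := by
        rw [cfc_mul (fun x : ℝ => x) (fun x : ℝ => x⁻¹) a (continuousOn_id' _) hcinv, cfc_id' ℝ a ha_sa]
      rw [← h1, cfc_congr (g := fun _ : ℝ => (1:ℝ)) fun x hx => by
          simp [mul_inv_cancel₀ (ne_of_gt (hpos x hx))]]
      exact cfc_const_one ℝ a
  · rw [hmain]
    have himg : ContinuousOn f ((fun x : ℝ => x⁻¹) '' spectrum ℝ a) := by
      rintro y ⟨x, hx, rfl⟩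
      exact (Real.continuousAt_rpow_const _ _
        (Or.inl (inv_ne_zero (ne_of_gt (hpos x hx))))).continuousWithinAt
    rw [← cfc_comp' f (fun x : ℝ => x⁻¹) a himg hcinv]
    have : cfc (fun x : ℝ => f x⁻¹) a = cfc (fun x : ℝ => x ^ ((1:ℝ)/2)) a := by
      refine cfc_congr fun x hx => ?_
      have hx0 := hpos x hx
      simp only [hf]
      rw [Real.inv_rpow hx0.le, ← Real.rpow_neg hx0.le]
      norm_num
    rw [this, hzT, mul_assoc,
      ← cfc_mul f _ a hcf (hcrpow _),
      cfc_congr (g := fun _ : ℝ => (1:ℝ)) fun x hx => by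
        have hx0 := hpos x hx
        simp only [hf]
        rw [← Real.rpow_add hx0]
        norm_num,
      cfc_const_one ℝ a, mul_one]
end
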